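/- A simple graph G satisfies th_-(G) = th_-(G,1) = 2 if and only if G is isomorphic to H(s,t) ⊔ rK_2 for some integers r, s, t ≥ 0 with r + s + t ≥ 1; in this case the order of G is odd. -/

import Mathlib

open SimpleGraph

/-- One round of skew zero forcing: every vertex (blue or white) with exactly one
white neighbor colors that neighbor blue. -/
def skewStep {V : Type*} (G : SimpleGraph V) (B : Set V) : Set V :=
  B ∪ {w | ∃ v, G.Adj v w ∧ ∀ u, G.Adj v u → u ∉ B → u = w}

/-- The set of blue vertices after `n` rounds of skew zero forcing starting from `S`. -/
def skewIter {V : Type*} (G : SimpleGraph V) (S : Set V) : ℕ → Set V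
  | 0 => S
  | n + 1 => skewStep G (skewIter G S n)

/-- `S` is a skew zero forcing set of `G`. -/
def IsSkewZFS {V : Type*} (G : SimpleGraph V) (S : Set V) : Prop :=
  ∃ n, skewIter G S n = Set.univ

/-- The skew propagation time `pt₋(G;S)`: the number of rounds needed for all
vertices to become blue. -/
noncomputable def skewPt {V : Type*} (G : SimpleGraph V) (S : Set V) : ℕ :=
  sInf {n | skewIter G S n = Set.univ}

/-- The skew throttling number `th₋(G)`. -/
noncomputable def skewTh {V : Type*} (G : SimpleGraph V) : ℕ :=
  sInf {m | ∃ S : Set V, IsSkewZFS G S ∧ m = S.ncard + skewPt G S}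

/-- The skew throttling number over sets of size `k`, `th₋(G,k)`. -/
noncomputable def skewThK {V : Type*} (G : SimpleGraph V) (k : ℕ) : ℕ :=
  sInf {m | ∃ S : Set V, IsSkewZFS G S ∧ S.ncard = k ∧ m = S.ncard + skewPt G S}

/-- The skew zero forcing number `Z₋(G)`. -/
noncomputable def skewZ {V : Type*} (G : SimpleGraph V) : ℕ :=
  sInf {m | ∃ S : Set V, IsSkewZFS G S ∧ m = S.ncard}

/-- The skew propagation time `pt₋(G)`: minimum propagation time over minimum
skew zero forcing sets. -/
noncomputable def skewPtMin {V : Type*} (G : SimpleGraph V) : ℕ :=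
  sInf {m | ∃ S : Set V, IsSkewZFS G S ∧ S.ncard = skewZ G ∧ m = skewPt G S}

/-- `rK₂`: the disjoint union of `r` copies of `K₂`. -/
def rK2 (r : ℕ) : SimpleGraph (Fin r × Fin 2) :=
  SimpleGraph.fromRel (fun a b => a.1 = b.1)

/-- Disjoint union of two simple graphs. -/
def disjUnion {α β : Type*} (G : SimpleGraph α) (H : SimpleGraph β) :
    SimpleGraph (α ⊕ β) :=
  SimpleGraph.fromRel (fun x y =>
    match x, y with
    | Sum.inl a, Sum.inl b => G.Adj a b
    | Sum.inr a, Sum.inr b => H.Adj a b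
    | _, _ => False)

/-- The corona `G ∘ K₁`: attach a pendant leaf to every vertex of `G`. -/
def coronaK1 {α : Type*} (G : SimpleGraph α) : SimpleGraph (α ⊕ α) :=
  SimpleGraph.fromRel (fun x y =>
    match x, y with
    | Sum.inl a, Sum.inl b => G.Adj a b
    | Sum.inl a, Sum.inr b => a = b
    | _, _ => False)

/-- The corona `G ∘ K₂`: attach a private copy of `K₂` (a triangle) to every
vertex of `G`. -/
def coronaK2 {α : Type*} (G : SimpleGraph α) : SimpleGraph (α ⊕ α × Fin 2) :=
  SimpleGraph.fromRel (fun x y =>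
    match x, y with
    | Sum.inl a, Sum.inl b => G.Adj a b
    | Sum.inl a, Sum.inr b => a = b.1
    | Sum.inr a, Sum.inr b => a.1 = b.1
    | _, _ => False)

/-- The graph `H(s,t)` with hub `b`, pendant paths `b xᵢ yᵢ` and triangles `b zᵢ wᵢ`. -/
def Hgraph (s t : ℕ) : SimpleGraph (Unit ⊕ ((Fin s × Fin 2) ⊕ (Fin t × Fin 2))) :=
  SimpleGraph.fromRel (fun x y =>
    match x, y with
    | Sum.inl _, Sum.inr (Sum.inl p) => p.2 = 0
    | Sum.inl _, Sum.inr (Sum.inr _) => True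
    | Sum.inr (Sum.inl p), Sum.inr (Sum.inl q) => p.1 = q.1
    | Sum.inr (Sum.inr p), Sum.inr (Sum.inr q) => p.1 = q.1
    | _, _ => False)

/-- The friendship graph `Fₙ`: a universal vertex joined to `n` disjoint copies of `K₂`. -/
def friendshipGraph (n : ℕ) : SimpleGraph (Unit ⊕ (Fin n × Fin 2)) :=
  SimpleGraph.fromRel (fun x y =>
    match x, y with
    | Sum.inl _, Sum.inr _ => True
    | Sum.inr p, Sum.inr q => p.1 = q.1
    | _, _ => False)

/-- The balanced spider `T_{p,ℓ}`: a center with `p` legs of `ℓ` vertices each. -/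
def spider (p ℓ : ℕ) : SimpleGraph (Unit ⊕ (Fin p × Fin ℓ)) :=
  SimpleGraph.fromRel (fun x y =>
    match x, y with
    | Sum.inl _, Sum.inr q => q.2.val = 0
    | Sum.inr q, Sum.inr q' => q.1 = q'.1 ∧ q'.2.val = q.2.val + 1
    | _, _ => False)

/-- The hypercube graph `Qₙ`: binary strings of length `n`, adjacent iff they
differ in exactly one coordinate. -/
def hypercube (n : ℕ) : SimpleGraph (Fin n → Bool) :=
  SimpleGraph.fromRel (fun x y => ∃! i, x i ≠ y i)

/-!
If `{b}` forces `G` in one round, every `w ≠ b` has a neighbour `v` with `N(v) ⊆ {b, w}`.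
Feeding this back to `v` shows that, unless `b` is a leaf, `w` and `v` force each other, so the
vertices other than `b` are perfectly matched into pairs `{w, m w}` with `N(w) ⊆ {b, m w}`; when
`b` is a leaf the same holds unless `b` lies in a `K₂` component, and then `∅` would force `G` in
one round. A matched pair with one, both or neither end adjacent to `b` is a pendant path `b x y`,
a triangle through `b`, or a `K₂` component, so `G ≅ H(s,t) ⊔ rK₂`. Conversely, in such a graph the
hub forces everything in one round and `∅` does not; and `th₋(G) = th₋(G,1) = 2` says exactly that
some vertex forces `G` in one round, `∅` does not, and `G` has at least two vertices.
-/

open Set Function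

theorem Prod.fst_eq_and_ne_iff_eq_rev {ι : Type*} (p q : ι × Fin 2) :
    p.1 = q.1 ∧ p ≠ q ↔ q = (p.1, p.2.rev) := by
  obtain ⟨i, j⟩ := p
  obtain ⟨i', j'⟩ := q
  fin_cases j <;> fin_cases j' <;> simp [eq_comm]

theorem Function.Involutive.exists_transversal {α : Type*} {m : α → α} (hm : Involutive m)
    (hfix : ∀ a, m a ≠ a) (Q : α → Prop) :
    ∃ R : Set α, (∀ a, m a ∈ R ↔ a ∉ R) ∧ ∀ a ∈ R, Q (m a) → Q a := by
  -- Represent `{a, m a}` by its unique end satisfying `Q` if there is one, and otherwise by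
  -- its smaller end for an arbitrary well-order.
  let _ : LinearOrder α := IsWellOrder.linearOrder WellOrderingRel
  refine ⟨{a | Q a ∧ ¬Q (m a) ∨ ((Q a ↔ Q (m a)) ∧ a < m a)}, fun a => ?_, fun a ha => ?_⟩
  · have : m a < a ↔ ¬a < m a := ⟨lt_asymm, fun h => (not_lt.mp h).lt_of_ne (hfix a)⟩
    simp only [mem_ofPred_eq, hm a, this]
    tauto
  · simp only [mem_ofPred_eq] at ha
    tauto

theorem Function.Involutive.exists_prod_fin_two_equiv {α : Type*} {m : α → α}
    (hm : Involutive m) (R : Set α) (hR : ∀ a, m a ∈ R ↔ a ∉ R) :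
    ∃ e : R × Fin 2 ≃ α, (∀ r, e (r, 0) = r) ∧ ∀ p, m (e p) = e (p.1, p.2.rev) := by
  let f : R × Fin 2 → α := fun p => if p.2 = 0 then p.1 else m p.1
  have hf : Bijective f := by
    constructor
    · rintro ⟨⟨r, hr⟩, j⟩ ⟨⟨r', hr'⟩, j'⟩ h
      fin_cases j <;> fin_cases j' <;>
        simp only [f, Fin.isValue, Fin.zero_eta, Fin.mk_one, one_ne_zero, zero_ne_one, reduceIte,
          Prod.mk.injEq, Subtype.mk.injEq, and_true, and_false] at h ⊢
      · exact h
      · exact (hR r').mp (h ▸ hr) hr'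
      · exact (hR r).mp (h ▸ hr') hr
      · exact hm.injective h
    · intro a
      by_cases ha : a ∈ R
      · exact ⟨(⟨a, ha⟩, 0), rfl⟩
      · exact ⟨(⟨m a, (hR a).mpr ha⟩, 1), hm a⟩
  refine ⟨Equiv.ofBijective f hf, fun r => rfl, ?_⟩
  rintro ⟨r, j⟩
  fin_cases j
  · rfl
  · exact hm r

theorem SimpleGraph.adj_iff_of_neighborSet_eq_singleton {V : Type*} {G : SimpleGraph V}
    {b c u : V} (h : G.neighborSet b = {c}) : G.Adj b u ↔ u = c := by
  rw [← mem_neighborSet, h, mem_singleton_iff]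

namespace SkewForcing

variable {V W : Type*} {G : SimpleGraph V} {b c v w : V}

def SkewForces (G : SimpleGraph V) (b v w : V) : Prop :=
  G.Adj v w ∧ G.neighborSet v ⊆ {b, w}

theorem SkewForces.neighborSet_eq (h : SkewForces G b v w) (hvb : ¬G.Adj v b) :
    G.neighborSet v = {w} :=
  eq_singleton_iff_unique_mem.mpr
    ⟨h.1, fun _ hu => (h.2 hu).resolve_left fun hub => hvb (hub ▸ hu)⟩

theorem subset_skewStep (B : Set V) : B ⊆ skewStep G B := subset_union_left

theorem skewIter_mono (S : Set V) : Monotone (skewIter G S) :=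
  monotone_nat_of_le_succ fun n => subset_skewStep (skewIter G S n)

theorem skewPt_le_iff {S : Set V} (hS : IsSkewZFS G S) {n : ℕ} :
    skewPt G S ≤ n ↔ skewIter G S n = univ :=
  ⟨fun h => univ_subset_iff.mp (Nat.sInf_mem hS ▸ skewIter_mono S h), fun h => Nat.sInf_le h⟩

theorem skewPt_eq_zero_iff {S : Set V} (hS : IsSkewZFS G S) : skewPt G S = 0 ↔ S = univ :=
  Nat.le_zero.symm.trans (skewPt_le_iff hS)

theorem skewPt_le_one_iff {S : Set V} (hS : IsSkewZFS G S) :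
    skewPt G S ≤ 1 ↔ skewStep G S = univ :=
  skewPt_le_iff hS

theorem skewStep_empty_eq_univ_iff :
    skewStep G ∅ = univ ↔ ∀ w, ∃ v, G.neighborSet v = {w} := by
  simp [skewStep, eq_univ_iff_forall, eq_singleton_iff_unique_mem]

theorem skewStep_singleton_eq_univ_iff :
    skewStep G {b} = univ ↔ ∀ w, w ≠ b → ∃ v, SkewForces G b v w := by
  simp [skewStep, SkewForces, eq_univ_iff_forall, subset_def, or_iff_not_imp_left]

theorem _root_.SimpleGraph.Iso.skewStep_preimage_eq_univ_iff {G' : SimpleGraph W}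
    (e : G ≃g G') (B : Set W) : skewStep G (e ⁻¹' B) = univ ↔ skewStep G' B = univ := by
  simp [skewStep, eq_univ_iff_forall, e.surjective.forall, e.surjective.exists, e.map_adj_iff]

theorem one_le_skewPt_of_ncard_eq_one [Nontrivial V] {S : Set V} (hS : IsSkewZFS G S)
    (hS1 : S.ncard = 1) : 1 ≤ skewPt G S := by
  obtain ⟨a, rfl⟩ := ncard_eq_one.mp hS1
  obtain ⟨x, hx⟩ := exists_ne a
  by_contra h
  have : x ∈ ({a} : Set V) := (skewPt_eq_zero_iff hS).mp (by omega) ▸ mem_univ x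
  exact hx this

theorem two_le_ncard_add_skewPt [Finite V] [Nontrivial V] (hempty : skewStep G ∅ ≠ univ)
    {S : Set V} (hS : IsSkewZFS G S) : 2 ≤ S.ncard + skewPt G S := by
  rcases Nat.lt_or_ge S.ncard 2 with h | h
  · interval_cases hS1 : S.ncard
    · obtain rfl := (ncard_eq_zero (toFinite S)).mp hS1
      by_contra h2
      exact hempty ((skewPt_le_one_iff hS).mp (by omega))
    · have := one_le_skewPt_of_ncard_eq_one hS hS1
      omega
  · omega

theorem skewTh_eq_two_and_skewThK_one_eq_two_iff [Finite V] :
    skewTh G = 2 ∧ skewThK G 1 = 2 ↔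
      Nontrivial V ∧ (∃ b, skewStep G {b} = univ) ∧ skewStep G ∅ ≠ univ := by
  constructor
  · rintro ⟨hth, hth1⟩
    obtain ⟨S, hS, hS1, hpt⟩ := Nat.sInf_mem (Nat.nonempty_of_pos_sInf (hth1 ▸ two_pos))
    replace hpt : 1 + skewPt G S = 2 := hS1 ▸ hpt.symm.trans hth1
    obtain ⟨b, rfl⟩ := ncard_eq_one.mp hS1
    refine ⟨?_, ⟨b, (skewPt_le_one_iff hS).mp (by omega)⟩, fun hempty => ?_⟩
    · by_contra hV
      rw [not_nontrivial_iff_subsingleton] at hV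
      have := (skewPt_eq_zero_iff hS).mpr (eq_univ_of_forall fun x => Subsingleton.elim x b)
      omega
    · have hZ : IsSkewZFS G ∅ := ⟨1, hempty⟩
      have hle : skewTh G ≤ (∅ : Set V).ncard + skewPt G ∅ := Nat.sInf_le ⟨∅, hZ, rfl⟩
      have := (skewPt_le_one_iff hZ).mpr hempty
      rw [ncard_empty] at hle
      omega
  · rintro ⟨hV, ⟨b, hb⟩, hempty⟩
    have hZb : IsSkewZFS G {b} := ⟨1, hb⟩
    have hptb : skewPt G {b} = 1 := le_antisymm ((skewPt_le_one_iff hZb).mpr hb)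
      (one_le_skewPt_of_ncard_eq_one hZb (ncard_singleton b))
    refine ⟨IsLeast.csInf_eq ⟨⟨{b}, hZb, by rw [ncard_singleton, hptb]⟩, ?_⟩,
      IsLeast.csInf_eq ⟨⟨{b}, hZb, ncard_singleton b, by rw [ncard_singleton, hptb]⟩, ?_⟩⟩
    · rintro m ⟨S, hS, rfl⟩
      exact two_le_ncard_add_skewPt hempty hS
    · rintro m ⟨S, hS, -, rfl⟩
      exact two_le_ncard_add_skewPt hempty hS

section Mates

variable (hforce : ∀ w, w ≠ b → ∃ v, SkewForces G b v w)
include hforce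

theorem SkewForces.symm_or_neighborSet_eq (h : SkewForces G b v w) (hvb : v ≠ b) :
    SkewForces G b w v ∨ G.neighborSet b = {v} := by
  obtain ⟨v', hv'⟩ := hforce v hvb
  rcases h.2 hv'.1.symm with rfl | rfl
  · exact Or.inr (hv'.neighborSet_eq G.irrefl)
  · exact Or.inl hv'

theorem exists_skewForces_of_neighborSet_eq (hc : G.neighborSet b = {c}) (hwb : w ≠ b)
    (hwc : w ≠ c) : ∃ p, p ≠ b ∧ SkewForces G b w p := by
  have hbc {u} := adj_iff_of_neighborSet_eq_singleton (u := u) hc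
  obtain ⟨v, hv⟩ := hforce w hwb
  have hvb : v ≠ b := by rintro rfl; exact hwc (hbc.mp hv.1)
  rcases hv.symm_or_neighborSet_eq hforce hvb with hwv | hcv
  · exact ⟨v, hvb, hwv⟩
  obtain rfl : v = c := (singleton_eq_singleton_iff.mp (hc.symm.trans hcv)).symm
  -- `c` forces `w`; a neighbour `u ∉ {b, c}` of `w` is refuted by looking at its own forcer.
  refine ⟨v, hvb, hv.1.symm, fun u hu => ?_⟩
  by_contra hu'
  simp only [mem_insert_iff, mem_singleton_iff, not_or] at hu'
  obtain ⟨x, hx⟩ := hforce u hu'.1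
  have hxb : x ≠ b := by rintro rfl; exact hu'.2 (hbc.mp hx.1)
  rcases hx.symm_or_neighborSet_eq hforce hxb with hux | hcx
  · rcases hux.2 (G.adj_symm hu) with h | rfl
    · exact hwb h
    · rcases hx.2 hv.1.symm with h | rfl
      · exact hvb h
      · exact hu'.2 rfl
  · obtain rfl : x = v := (singleton_eq_singleton_iff.mp (hcv.symm.trans hcx)).symm
    rcases hv.2 hx.1 with h | rfl
    · exact hu'.1 h
    · exact G.irrefl hu

theorem exists_skewForces_of_neighborSet_eq_self (hempty : skewStep G ∅ ≠ univ)
    (hc : G.neighborSet b = {c}) : ∃ p, p ≠ b ∧ SkewForces G b c p := by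
  have hbc {u} := adj_iff_of_neighborSet_eq_singleton (u := u) hc
  by_cases hp : ∃ p, G.Adj c p ∧ p ≠ b
  · obtain ⟨p, hcp, hpb⟩ := hp
    obtain ⟨x, hx⟩ := hforce p hpb
    have hxb : x ≠ b := by rintro rfl; exact hcp.ne' (hbc.mp hx.1)
    suffices x = c from ⟨p, hpb, this ▸ hx⟩
    rcases hx.symm_or_neighborSet_eq hforce hxb with hpx | hcx
    · exact ((hpx.2 hcp.symm).resolve_left (hbc.mpr rfl).ne').symm
    · exact singleton_eq_singleton_iff.mp (hcx.symm.trans hc)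
  -- Now `{b, c}` is a `K₂` component and every vertex has a pendant neighbour.
  push Not at hp
  refine absurd (skewStep_empty_eq_univ_iff.mpr fun x => ?_) hempty
  by_cases hxb : x = b
  · exact ⟨c, hxb ▸ eq_singleton_iff_unique_mem.mpr ⟨(hbc.mpr rfl).symm, hp⟩⟩
  by_cases hxc : x = c
  · exact ⟨b, hxc ▸ hc⟩
  obtain ⟨p, hpb, hxp⟩ := exists_skewForces_of_neighborSet_eq hforce hc hxb hxc
  have hpc : p ≠ c := by rintro rfl; exact hxb (hp x hxp.1.symm)
  obtain ⟨q, -, hpq⟩ := exists_skewForces_of_neighborSet_eq hforce hc hpb hpc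
  have hNp := hpq.neighborSet_eq fun hpb' => hpc (hbc.mp hpb'.symm)
  obtain rfl : x = q := by
    have hx : x ∈ G.neighborSet p := hxp.1.symm
    rwa [hNp] at hx
  exact ⟨p, hNp⟩

theorem exists_skewForces_of_ne (hempty : skewStep G ∅ ≠ univ) (hwb : w ≠ b) :
    ∃ p, p ≠ b ∧ SkewForces G b w p := by
  by_cases hb : ∃ c, G.neighborSet b = {c}
  · obtain ⟨c, hc⟩ := hb
    rcases eq_or_ne w c with rfl | hwc
    · exact exists_skewForces_of_neighborSet_eq_self hforce hempty hc
    · exact exists_skewForces_of_neighborSet_eq hforce hc hwb hwc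
  · obtain ⟨v, hv⟩ := hforce w hwb
    have hvb : v ≠ b := by rintro rfl; exact hb ⟨w, hv.neighborSet_eq G.irrefl⟩
    exact ⟨v, hvb, (hv.symm_or_neighborSet_eq hforce hvb).resolve_right fun h => hb ⟨v, h⟩⟩

end Mates

end SkewForcing

def hubGraph {ι : Type*} (P : ι × Fin 2 → Prop) : SimpleGraph (Option (ι × Fin 2)) :=
  SimpleGraph.fromRel fun x y =>
    match x, y with
    | none, some p => P p
    | some p, some q => p.1 = q.1
    | _, _ => False

namespace hubGraph

open SkewForcing

variable {ι ι' : Type*} {P : ι × Fin 2 → Prop}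

@[simp]
theorem adj_none_some {p : ι × Fin 2} : (hubGraph P).Adj none (some p) ↔ P p := by
  simp [hubGraph]

@[simp]
theorem adj_some_none {p : ι × Fin 2} : (hubGraph P).Adj (some p) none ↔ P p := by
  simp [hubGraph]

@[simp]
theorem adj_some_some {p q : ι × Fin 2} :
    (hubGraph P).Adj (some p) (some q) ↔ p.1 = q.1 ∧ p ≠ q := by
  simp [hubGraph, eq_comm, and_comm]

def congr {P' : ι' × Fin 2 → Prop} (e : ι ≃ ι') (he : ∀ i j, P' (e i, j) ↔ P (i, j)) :
    hubGraph P ≃g hubGraph P' where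
  toEquiv := (e.prodCongr (Equiv.refl _)).optionCongr
  map_rel_iff' := by
    rintro (_ | ⟨i, j⟩) (_ | ⟨i', j'⟩) <;> simp [he, Prod.ext_iff]

theorem skewStep_singleton_none_eq_univ : skewStep (hubGraph P) {none} = univ := by
  refine skewStep_singleton_eq_univ_iff.mpr ?_
  rintro (_ | p) hp
  · exact absurd rfl hp
  refine ⟨some (p.1, p.2.rev), ?_, ?_⟩
  · rw [adj_some_some, Prod.fst_eq_and_ne_iff_eq_rev, Fin.rev_rev]
  rintro (_ | q) hq
  · exact .inl rfl
  · rw [mem_neighborSet, adj_some_some, Prod.fst_eq_and_ne_iff_eq_rev, Fin.rev_rev] at hq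
    exact .inr (congrArg some hq)

theorem skewStep_empty_ne_univ : skewStep (hubGraph P) ∅ ≠ univ := by
  rw [Ne, skewStep_empty_eq_univ_iff]
  intro h
  obtain ⟨_ | p, hp⟩ := h none
  · simpa using hp.symm.subset rfl
  · have : some (p.1, p.2.rev) ∈ (hubGraph P).neighborSet (some p) := by
      rw [mem_neighborSet, adj_some_some, Prod.fst_eq_and_ne_iff_eq_rev]
    simp [hp] at this

end hubGraph

/-- The hub adjacency of `H(s,t) ⊔ rK₂` seen as a `hubGraph`: an index `inl i` is the pendant
path `b x y` with `x = (inl i, 0)`, `inr (inl i)` a triangle and `inr (inr i)` a `K₂`. -/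
def modelHubAdj {α β γ : Type*} : (α ⊕ β ⊕ γ) × Fin 2 → Prop
  | (.inl _, j) => j = 0
  | (.inr (.inl _), _) => True
  | (.inr (.inr _), _) => False

theorem exists_equiv_sum_fin {ι : Type*} [Finite ι] (P : ι × Fin 2 → Prop)
    (hP : ∀ i, P (i, 1) → P (i, 0)) :
    ∃ (s t r : ℕ) (e : ι ≃ Fin s ⊕ Fin t ⊕ Fin r), ∀ i j, modelHubAdj (e i, j) ↔ P (i, j) := by
  let X := {i // P (i, 0) ∧ ¬P (i, 1)}
  let T := {i // P (i, 1)}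
  let K := {i // ¬P (i, 0)}
  have hg : Bijective (Sum.elim (↑) (Sum.elim (↑) (↑)) : X ⊕ T ⊕ K → ι) := by
    refine ⟨Subtype.val_injective.sumElim (Subtype.val_injective.sumElim Subtype.val_injective
      fun (x : T) (y : K) hxy => y.2 (hxy ▸ hP _ x.2)) ?_, fun i => ?_⟩
    · rintro x (y | y) (hxy : (x : ι) = y)
      · exact x.2.2 (hxy ▸ y.2)
      · exact y.2 (hxy ▸ x.2.1)
    · by_cases h0 : P (i, 0) <;> by_cases h1 : P (i, 1)
      · exact ⟨.inr (.inl ⟨i, h1⟩), rfl⟩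
      · exact ⟨.inl ⟨i, h0, h1⟩, rfl⟩
      · exact absurd (hP i h1) h0
      · exact ⟨.inr (.inr ⟨i, h0⟩), rfl⟩
  let g := Equiv.ofBijective _ hg
  refine ⟨Nat.card X, Nat.card T, Nat.card K, g.symm.trans ((Finite.equivFin X).sumCongr
    ((Finite.equivFin T).sumCongr (Finite.equivFin K))), fun i j => ?_⟩
  obtain ⟨x, rfl⟩ := g.surjective i
  rw [Equiv.trans_apply, g.symm_apply_apply]
  rcases x with ⟨i, hi⟩ | ⟨i, hi⟩ | ⟨i, hi⟩ <;> fin_cases j <;>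
    simp [g, modelHubAdj] <;> tauto

def hubGraphIsoDisjUnion (s t r : ℕ) :
    hubGraph (modelHubAdj (α := Fin s) (β := Fin t) (γ := Fin r)) ≃g
      disjUnion (Hgraph s t) (rK2 r) where
  toFun
    | none => .inl (.inl ())
    | some (.inl i, j) => .inl (.inr (.inl (i, j)))
    | some (.inr (.inl i), j) => .inl (.inr (.inr (i, j)))
    | some (.inr (.inr i), j) => .inr (i, j)
  invFun
    | .inl (.inl ()) => none
    | .inl (.inr (.inl (i, j))) => some (.inl i, j)
    | .inl (.inr (.inr (i, j))) => some (.inr (.inl i), j)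
    | .inr (i, j) => some (.inr (.inr i), j)
  left_inv := by rintro (_ | ⟨i | i | i, j⟩) <;> rfl
  right_inv := by rintro ((⟨⟩ | ⟨i, j⟩ | ⟨i, j⟩) | ⟨i, j⟩) <;> rfl
  map_rel_iff' := by
    rintro (_ | ⟨i | i | i, j⟩) (_ | ⟨i' | i' | i', j'⟩) <;>
      simp only [Equiv.coe_fn_mk, disjUnion, Hgraph, rK2, SimpleGraph.fromRel_adj] <;>
      simp [modelHubAdj, Prod.ext_iff] <;> tauto

theorem card_disjUnion_Hgraph_rK2 (s t r : ℕ) :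
    Fintype.card ((Unit ⊕ ((Fin s × Fin 2) ⊕ (Fin t × Fin 2))) ⊕ (Fin r × Fin 2)) =
      2 * (s + t + r) + 1 := by
  simp only [Fintype.card_sum, Fintype.card_prod, Fintype.card_unit, Fintype.card_fin]
  ring

namespace SkewForcing

variable {V : Type*} {G : SimpleGraph V}

theorem nonempty_iso_hubGraph {ι : Type*} (b : V) (e : ι × Fin 2 ≃ {w // w ≠ b})
    (he : ∀ p q, G.Adj (e p) (e q) ↔ p.1 = q.1 ∧ p ≠ q) :
    Nonempty (G ≃g hubGraph fun p => G.Adj b (e p)) := by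
  classical
  refine ⟨RelIso.symm
    { toEquiv := e.optionCongr.trans (Equiv.optionSubtypeNe b), map_rel_iff' := ?_ }⟩
  rintro (_ | p) (_ | q) <;> simp [he, G.adj_comm]

theorem exists_iso_disjUnion_of_skewForces [Finite V] {b : V}
    (hmate : ∀ w, w ≠ b → ∃ p, p ≠ b ∧ SkewForces G b w p) :
    ∃ s t r, Nonempty (G ≃g disjUnion (Hgraph s t) (rK2 r)) := by
  choose! m hmb hm using hmate
  let mW : {w // w ≠ b} → {w // w ≠ b} := fun w => ⟨m w, hmb w w.2⟩
  have hadj : ∀ x y : {w // w ≠ b}, G.Adj x y ↔ y = mW x := fun x y =>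
    ⟨fun h => Subtype.ext (((hm x x.2).2 h).resolve_left y.2), fun h => h ▸ (hm x x.2).1⟩
  have hinv : Involutive mW := fun x => ((hadj _ _).mp ((hadj x _).mpr rfl).symm).symm
  have hfix : ∀ x, mW x ≠ x := fun x h => G.irrefl ((hadj x x).mpr h.symm)
  obtain ⟨R, hR, hRb⟩ := hinv.exists_transversal hfix fun x => G.Adj b x
  obtain ⟨e, he0, hem⟩ := hinv.exists_prod_fin_two_equiv R hR
  have he : ∀ p q, G.Adj (e p) (e q) ↔ p.1 = q.1 ∧ p ≠ q := fun p q => by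
    rw [hadj, hem, e.injective.eq_iff, Prod.fst_eq_and_ne_iff_eq_rev]
  have hP : ∀ i, G.Adj b (e (i, 1)) → G.Adj b (e (i, 0)) := fun i => by
    rw [he0, show e (i, 1) = mW i by rw [← he0 i, hem]; rfl]
    exact hRb i i.2
  obtain ⟨φ⟩ := nonempty_iso_hubGraph b e he
  obtain ⟨s, t, r, d, hd⟩ := exists_equiv_sum_fin (fun p => G.Adj b (e p)) hP
  exact ⟨s, t, r, ⟨φ.trans ((hubGraph.congr d hd).trans (hubGraphIsoDisjUnion s t r))⟩⟩

theorem exists_skewStep_singleton_eq_univ_of_iso_hubGraph {ι : Type*}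
    {P : ι × Fin 2 → Prop} (ψ : G ≃g hubGraph P) : ∃ b, skewStep G {b} = univ := by
  refine ⟨ψ.symm none, ?_⟩
  have : ψ ⁻¹' {none} = {ψ.symm none} := by ext; simp [ψ.eq_symm_apply]
  rw [← this, ψ.skewStep_preimage_eq_univ_iff]
  exact hubGraph.skewStep_singleton_none_eq_univ

theorem skewStep_empty_ne_univ_of_iso_hubGraph {ι : Type*} {P : ι × Fin 2 → Prop}
    (ψ : G ≃g hubGraph P) : skewStep G ∅ ≠ univ := by
  rw [Ne, ← preimage_empty (f := ψ), ψ.skewStep_preimage_eq_univ_iff]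
  exact hubGraph.skewStep_empty_ne_univ

end SkewForcing

open SkewForcing in
/-- `th₋(G) = th₋(G,1) = 2` iff `G ≅ H(s,t) ⊔ rK₂` with `r+s+t ≥ 1`;
in this case the order of `G` is odd. -/
theorem skewTh_eq_two_of_one_vertex_iff {V : Type*} [Fintype V] (G : SimpleGraph V) :
    ((skewTh G = 2 ∧ skewThK G 1 = 2) ↔
      ∃ r s t : ℕ, 1 ≤ r + s + t ∧
        Nonempty (G ≃g disjUnion (Hgraph s t) (rK2 r))) ∧
    ((skewTh G = 2 ∧ skewThK G 1 = 2) → Odd (Fintype.card V)) := by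
  have hcard {r s t : ℕ} (e : G ≃g disjUnion (Hgraph s t) (rK2 r)) :
      Fintype.card V = 2 * (s + t + r) + 1 :=
    (Fintype.card_congr e.toEquiv).trans (card_disjUnion_Hgraph_rK2 s t r)
  have hiff : (skewTh G = 2 ∧ skewThK G 1 = 2) ↔
      ∃ r s t : ℕ, 1 ≤ r + s + t ∧ Nonempty (G ≃g disjUnion (Hgraph s t) (rK2 r)) := by
    rw [skewTh_eq_two_and_skewThK_one_eq_two_iff, ← Fintype.one_lt_card_iff_nontrivial]
    constructor
    · rintro ⟨hV, ⟨b, hb⟩, hempty⟩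
      obtain ⟨s, t, r, ⟨e⟩⟩ := exists_iso_disjUnion_of_skewForces fun w hw =>
        exists_skewForces_of_ne (skewStep_singleton_eq_univ_iff.mp hb) hempty hw
      exact ⟨r, s, t, by have := hcard e; omega, ⟨e⟩⟩
    · rintro ⟨r, s, t, hrst, ⟨e⟩⟩
      let ψ := e.trans (hubGraphIsoDisjUnion s t r).symm
      exact ⟨by have := hcard e; omega, exists_skewStep_singleton_eq_univ_of_iso_hubGraph ψ,
        skewStep_empty_ne_univ_of_iso_hubGraph ψ⟩
  refine ⟨hiff, fun h => ?_⟩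
  obtain ⟨r, s, t, -, ⟨e⟩⟩ := hiff.mp h
  rw [hcard e]
  exact odd_two_mul_add_one _
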